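/- Let X ⊆ ℝ^d be a nonempty compact convex set with diameter D = max{‖x−y‖ : x, y ∈ X} and let ‖X‖ = max{‖x − y_1‖ : x ∈ X}. Suppose the cost vectors b_1, …, b_N ∈ ℝ^d satisfy ‖b_i‖ ≤ L for all i, and let x_1, …, x_N be the actions of the lazy anytime Subgradient algorithm on X with base point y_1 and parameter η > 0. Then for x* any minimiser of x ↦ Σ_{i=1}^N b_i·x over X, the regret satisfies Σ_{i=1}^N b_i·(x_i − x*) ≤ L·D + (‖X‖²/(2η) + 2η·L²)·√N. Moreover, if L > 0, y_1 ∈ X, X is not a single point, and η = ‖X‖/(2L), then Σ_{i=1}^N b_i·(x_i − x*) ≤ L·D + 2L·‖X‖·√N ≤ 3·L·D·√N. -/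

import Mathlib

/-!
Projecting `y₁ - c • B` onto the convex set `X` is the same as minimising the regularised loss
`⟪B, z⟫ + ‖z - y₁‖² / (2c)` over `X`, and the variational inequality of the projection makes the
projection `q` a strong minimiser: it beats every `z ∈ X` by `‖z - q‖² / (2c)`. Hence the lazy
Subgradient algorithm is follow-the-regularised-leader with step sizes `eₙ = η / √n`. Since the
step sizes decrease, the regularised loss of the current leader grows by at least
`⟪bₙ, xₙ⟫ - eₙ ‖bₙ‖² / 2` per round, and telescoping bounds the regret against any `x* ∈ X` by
`‖x* - y₁‖² / (2 e_N) + ∑ₙ eₙ L² / 2 ≤ (‖X‖² / (2η) + 2ηL²) √N`. With `η = ‖X‖ / (2L)` both terms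
equal `L ‖X‖ √N`, and `‖X‖ ≤ D` once `y₁ ∈ X`.
-/

open Finset
open scoped RealInnerProductSpace

/-- `IsProjOn X p q` says that `q` is the Euclidean nearest-point projection of `p`
onto the set `X`. -/
def IsProjOn {d : ℕ} (X : Set (EuclideanSpace ℝ (Fin d)))
    (p q : EuclideanSpace ℝ (Fin d)) : Prop :=
  q ∈ X ∧ ∀ z ∈ X, ‖p - q‖ ≤ ‖p - z‖

theorem Finset.sum_Icc_one_eq_sum_range {M : Type*} [AddCommMonoid M] (f : ℕ → M) (N : ℕ) :
    ∑ i ∈ Icc 1 N, f i = ∑ i ∈ range N, f (i + 1) := by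
  rw [← Ico_add_one_right_eq_Icc, sum_Ico_eq_sum_range, add_tsub_cancel_right]
  simp only [add_comm 1]

theorem sum_range_inv_sqrt_succ_le (N : ℕ) : ∑ t ∈ range N, (√(t + 1))⁻¹ ≤ 2 * √N := by
  induction N with
  | zero => simp
  | succ n ih =>
    rw [sum_range_succ]
    push_cast
    set r := √(n : ℝ)
    set s := √((n : ℝ) + 1)
    have hs : 0 < s := Real.sqrt_pos.2 (by positivity)
    have hrs : r ≤ s := Real.sqrt_le_sqrt (by linarith)
    have hsr : s ^ 2 - r ^ 2 = 1 := by
      rw [Real.sq_sqrt (by positivity), Real.sq_sqrt (by positivity)]; ring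
    have : s⁻¹ ≤ 2 * (s - r) := by
      rw [inv_le_iff_one_le_mul₀' hs]
      nlinarith [Real.sqrt_nonneg (n : ℝ)]
    linarith

theorem sum_range_div_sqrt_max_one_le {η : ℝ} (hη : 0 ≤ η) (N : ℕ) :
    ∑ t ∈ range N, η / √(max (t : ℝ) 1) ≤ 4 * η * √N := by
  have hterm (t : ℕ) : η / √(max (t : ℝ) 1) ≤ 2 * η / √(t + 1) := by
    have hsqrt : √((t : ℝ) + 1) ≤ 2 * √(max (t : ℝ) 1) := by
      rw [Real.sqrt_le_left (by positivity), mul_pow, Real.sq_sqrt (by positivity)]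
      linarith [le_max_left (t : ℝ) 1, le_max_right (t : ℝ) 1]
    rw [div_le_div_iff₀ (Real.sqrt_pos.2 (by positivity)) (Real.sqrt_pos.2 (by positivity))]
    nlinarith
  calc ∑ t ∈ range N, η / √(max (t : ℝ) 1) ≤ ∑ t ∈ range N, 2 * η / √(t + 1) :=
        sum_le_sum fun t _ => hterm t
    _ = 2 * η * ∑ t ∈ range N, (√(t + 1))⁻¹ := by simp only [mul_sum, div_eq_mul_inv]
    _ ≤ 2 * η * (2 * √N) := by gcongr; exact sum_range_inv_sqrt_succ_le N
    _ = 4 * η * √N := by ring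

section FollowTheRegularizedLeader

variable {E : Type*} [NormedAddCommGroup E] [InnerProductSpace ℝ E]

noncomputable def regularizedLoss (y B : E) (c : ℝ) (z : E) : ℝ :=
  ⟪B, z⟫ + ‖z - y‖ ^ 2 / (2 * c)

theorem regularizedLoss_add_inner_le {y B g z : E} {c c' : ℝ} (hc' : 0 < c') (hcc : c' ≤ c) :
    regularizedLoss y B c z + ⟪g, z⟫ ≤ regularizedLoss y (B + g) c' z := by
  unfold regularizedLoss
  rw [inner_add_left]
  have : ‖z - y‖ ^ 2 / (2 * c) ≤ ‖z - y‖ ^ 2 / (2 * c') := by gcongr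
  linarith

theorem inner_sub_norm_sq_div_le {c : ℝ} (hc : 0 < c) (g u : E) :
    ⟪g, u⟫ - ‖u‖ ^ 2 / (2 * c) ≤ c * ‖g‖ ^ 2 / 2 := by
  have hsquare : ⟪g, u⟫ - ‖u‖ ^ 2 / (2 * c) - c * ‖g‖ ^ 2 / 2 = -‖u - c • g‖ ^ 2 / (2 * c) := by
    rw [norm_sub_sq_real, real_inner_smul_right, norm_smul, Real.norm_of_nonneg hc.le,
      real_inner_comm]
    field_simp
    ring
  have : -‖u - c • g‖ ^ 2 / (2 * c) ≤ 0 := div_nonpos_of_nonpos_of_nonneg (by simp) (by positivity)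
  linarith

theorem inner_sub_le_regularizedLoss_sub {X : Set E} {y B g w w' : E} {c c' : ℝ} (hc : 0 < c)
    (hc' : 0 < c') (hcc : c' ≤ c)
    (hw : ∀ z ∈ X, regularizedLoss y B c w + ‖z - w‖ ^ 2 / (2 * c) ≤ regularizedLoss y B c z)
    (hw' : w' ∈ X) :
    ⟪g, w⟫ - c * ‖g‖ ^ 2 / 2 ≤ regularizedLoss y (B + g) c' w' - regularizedLoss y B c w := by
  have hmin := hw w' hw'
  have hmono := regularizedLoss_add_inner_le (y := y) (B := B) (g := g) (z := w') hc' hcc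
  have hyoung := inner_sub_norm_sq_div_le hc g (w - w')
  rw [inner_sub_right, norm_sub_rev] at hyoung
  linarith

theorem ftrl_regret_le {X : Set E} {y z : E} {g w : ℕ → E} {e : ℕ → ℝ} (he : ∀ t, 0 < e t)
    (he_anti : Antitone e) (hwX : ∀ t, w t ∈ X)
    (hw : ∀ t, ∀ z ∈ X, regularizedLoss y (∑ i ∈ range t, g i) (e t) (w t) +
      ‖z - w t‖ ^ 2 / (2 * e t) ≤ regularizedLoss y (∑ i ∈ range t, g i) (e t) z)
    (hz : z ∈ X) (N : ℕ) :
    ∑ t ∈ range N, ⟪g t, w t - z⟫ ≤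
      ‖z - y‖ ^ 2 / (2 * e N) + ∑ t ∈ range N, e t * ‖g t‖ ^ 2 / 2 := by
  set F : ℕ → ℝ := fun t => regularizedLoss y (∑ i ∈ range t, g i) (e t) (w t)
  have hstep (t : ℕ) : ⟪g t, w t⟫ - e t * ‖g t‖ ^ 2 / 2 ≤ F (t + 1) - F t := by
    simp only [F, sum_range_succ]
    exact inner_sub_le_regularizedLoss_sub (he t) (he (t + 1)) (he_anti t.le_succ) (hw t) (hwX (t + 1))
  have htelescope : ∑ t ∈ range N, (⟪g t, w t⟫ - e t * ‖g t‖ ^ 2 / 2) ≤ F N - F 0 :=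
    (sum_le_sum fun t _ => hstep t).trans_eq (sum_range_sub F N)
  have hF0 : 0 ≤ F 0 := by
    simp only [F, regularizedLoss, sum_range_zero, inner_zero_left, zero_add]
    exact div_nonneg (sq_nonneg _) (by linarith [he 0])
  have hFN : F N ≤ ⟪∑ i ∈ range N, g i, z⟫ + ‖z - y‖ ^ 2 / (2 * e N) :=
    (le_add_of_nonneg_right (div_nonneg (sq_nonneg _) (by linarith [he N]))).trans (hw N z hz)
  simp only [inner_sub_right, sum_sub_distrib, sum_inner] at htelescope hFN ⊢
  linarith

end FollowTheRegularizedLeader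

variable {d : ℕ} {X : Set (EuclideanSpace ℝ (Fin d))}

theorem IsProjOn.inner_sub_nonpos {p q z : EuclideanSpace ℝ (Fin d)} (h : IsProjOn X p q)
    (hX : Convex ℝ X) (hz : z ∈ X) : ⟪p - q, z - q⟫ ≤ 0 := by
  have : Nonempty X := ⟨⟨q, h.1⟩⟩
  refine (norm_eq_iInf_iff_real_inner_le_zero hX h.1).1 ?_ z hz
  have hbdd : BddBelow (Set.range fun w : X => ‖p - w‖) :=
    ⟨0, by rintro _ ⟨w, rfl⟩; exact norm_nonneg _⟩
  exact le_antisymm (le_ciInf fun w => h.2 w w.2) (ciInf_le hbdd ⟨q, h.1⟩)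

theorem IsProjOn.regularizedLoss_add_le {y B q z : EuclideanSpace ℝ (Fin d)} {c : ℝ}
    (h : IsProjOn X (y - c • B) q) (hX : Convex ℝ X) (hc : 0 < c) (hz : z ∈ X) :
    regularizedLoss y B c q + ‖z - q‖ ^ 2 / (2 * c) ≤ regularizedLoss y B c z := by
  have hvar := h.inner_sub_nonpos hX hz
  have hpyth : ‖z - y‖ ^ 2 = ‖z - q‖ ^ 2 - 2 * ⟪y - q, z - q⟫ + ‖q - y‖ ^ 2 := by
    rw [← sub_sub_sub_cancel_right z y q, norm_sub_sq_real, real_inner_comm, norm_sub_rev y]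
  have hvar_eq : ⟪y - c • B - q, z - q⟫ = ⟪y - q, z - q⟫ - c * (⟪B, z⟫ - ⟪B, q⟫) := by
    rw [sub_right_comm, inner_sub_left, real_inner_smul_left, inner_sub_right B]
  have hgap : regularizedLoss y B c z - (regularizedLoss y B c q + ‖z - q‖ ^ 2 / (2 * c)) =
      -⟪y - c • B - q, z - q⟫ / c := by
    unfold regularizedLoss
    rw [hvar_eq, hpyth]
    field_simp
    ring
  have : 0 ≤ -⟪y - c • B - q, z - q⟫ / c := div_nonneg (by linarith) hc.le
  linarith

theorem lazySubgradient_regret_le (hX : Convex ℝ X) {y1 z : EuclideanSpace ℝ (Fin d)} {η L : ℝ}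
    (hη : 0 < η) {N : ℕ} (hN : 1 ≤ N) {b x : ℕ → EuclideanSpace ℝ (Fin d)}
    (hb : ∀ i, 1 ≤ i → i ≤ N → ‖b i‖ ≤ L) (hx1 : IsProjOn X y1 (x 1))
    (hxn : ∀ n, 2 ≤ n →
      IsProjOn X (y1 - (η / √((n - 1 : ℕ) : ℝ)) • ∑ i ∈ Icc 1 (n - 1), b i) (x n))
    (hz : z ∈ X) :
    ∑ i ∈ Icc 1 N, ⟪b i, x i - z⟫ ≤ (‖z - y1‖ ^ 2 / (2 * η) + 2 * η * L ^ 2) * √N := by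
  -- `max t 1` only matters at `t = 0`, where the sum is empty: `x 1` projects `y1` itself
  set e : ℕ → ℝ := fun t => η / √(max (t : ℝ) 1)
  have he (t : ℕ) : 0 < e t := div_pos hη (Real.sqrt_pos.2 (by positivity))
  have he_anti : Antitone e := fun s t hst =>
    div_le_div_of_nonneg_left hη.le (Real.sqrt_pos.2 (by positivity))
      (Real.sqrt_le_sqrt (max_le_max_right 1 (by exact_mod_cast hst)))
  have hproj (t : ℕ) : IsProjOn X (y1 - e t • ∑ i ∈ range t, b (i + 1)) (x (t + 1)) := by
    rcases t with _ | s
    · simpa using hx1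
    · simpa [e, sum_Icc_one_eq_sum_range] using hxn (s + 2) (by omega)
  have hftrl := ftrl_regret_le he he_anti (fun t => (hproj t).1)
    (fun t _ hz => (hproj t).regularizedLoss_add_le hX (he t) hz) hz N
  have heN : e N = η / √N := by simp [e, hN]
  have hsteps : ∑ t ∈ range N, e t * ‖b (t + 1)‖ ^ 2 / 2 ≤ 2 * η * L ^ 2 * √N :=
    calc ∑ t ∈ range N, e t * ‖b (t + 1)‖ ^ 2 / 2 ≤ ∑ t ∈ range N, e t * L ^ 2 / 2 := by
          refine sum_le_sum fun t ht => ?_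
          have hbt := hb (t + 1) (by omega) (by simp at ht; omega)
          gcongr
      _ = L ^ 2 / 2 * ∑ t ∈ range N, e t := by
          rw [mul_sum]; exact sum_congr rfl fun t _ => by ring
      _ ≤ L ^ 2 / 2 * (4 * η * √N) := by gcongr; exact sum_range_div_sqrt_max_one_le hη.le N
      _ = 2 * η * L ^ 2 * √N := by ring
  have hreg : ‖z - y1‖ ^ 2 / (2 * e N) = ‖z - y1‖ ^ 2 / (2 * η) * √N := by
    rw [heN]; field_simp
  rw [sum_Icc_one_eq_sum_range, add_mul]
  linarith

theorem subgradient_worst_case_regret {d : ℕ}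
    (X : Set (EuclideanSpace ℝ (Fin d)))
    (hXconvex : Convex ℝ X)
    (y1 : EuclideanSpace ℝ (Fin d)) (D K L η : ℝ)
    (hD : IsGreatest {r : ℝ | ∃ x ∈ X, ∃ y ∈ X, r = ‖x - y‖} D)
    (hK : IsGreatest {r : ℝ | ∃ x ∈ X, r = ‖x - y1‖} K)
    (hη : 0 < η)
    (N : ℕ) (hN : 1 ≤ N)
    (b : ℕ → EuclideanSpace ℝ (Fin d))
    (hb : ∀ i, 1 ≤ i → i ≤ N → ‖b i‖ ≤ L)
    (x : ℕ → EuclideanSpace ℝ (Fin d))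
    (hx1 : IsProjOn X y1 (x 1))
    (hxn : ∀ n, 2 ≤ n →
      IsProjOn X
        (y1 - (η / Real.sqrt ((n - 1 : ℕ) : ℝ)) • ∑ i ∈ Icc 1 (n - 1), b i) (x n))
    (xstar : EuclideanSpace ℝ (Fin d)) (hxstar : xstar ∈ X) :
    (∑ i ∈ Icc 1 N, ⟪b i, x i - xstar⟫ ≤
        L * D + (K ^ 2 / (2 * η) + 2 * η * L ^ 2) * Real.sqrt N) ∧
    (0 < L → y1 ∈ X → (∃ u ∈ X, ∃ w ∈ X, u ≠ w) → η = K / (2 * L) →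
      ∑ i ∈ Icc 1 N, ⟪b i, x i - xstar⟫ ≤ L * D + 2 * L * K * Real.sqrt N ∧
      L * D + 2 * L * K * Real.sqrt N ≤ 3 * L * D * Real.sqrt N) := by
  have hL : 0 ≤ L := (norm_nonneg _).trans (hb 1 le_rfl hN)
  have hD0 : 0 ≤ D := by obtain ⟨u, -, w, -, rfl⟩ := hD.1; exact norm_nonneg _
  have hregret : ∑ i ∈ Icc 1 N, ⟪b i, x i - xstar⟫ ≤ (K ^ 2 / (2 * η) + 2 * η * L ^ 2) * √N := by
    have hxstarK : ‖xstar - y1‖ ≤ K := hK.2 ⟨xstar, hxstar, rfl⟩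
    refine (lazySubgradient_regret_le hXconvex hη hN hb hx1 hxn hxstar).trans ?_
    gcongr
  refine ⟨by linarith [mul_nonneg hL hD0], fun hLpos hy1 _ hηK => ⟨?_, ?_⟩⟩
  · have hKη : K = 2 * L * η := by rw [hηK]; field_simp
    have hbalance : K ^ 2 / (2 * η) + 2 * η * L ^ 2 = 2 * L * K := by
      rw [hKη]; field_simp; ring
    rw [hbalance] at hregret
    linarith [mul_nonneg hL hD0]
  · have hKD : K ≤ D := by obtain ⟨u, hu, hKu⟩ := hK.1; exact hD.2 ⟨u, hu, y1, hy1, hKu⟩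
    have hsqrtN : 1 ≤ √N := Real.one_le_sqrt.2 (by exact_mod_cast hN)
    nlinarith [mul_le_mul_of_nonneg_left hsqrtN (mul_nonneg hL hD0),
      mul_le_mul_of_nonneg_right (mul_le_mul_of_nonneg_left hKD hL) (Real.sqrt_nonneg (N : ℝ))]
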